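/- arXiv:1201.2609 — 4 statements merged into one kernel-verified Lean document; each statement's English description precedes it below -/
import Mathlib

section
/- In the group ring Z_2[G] where G is cyclic of odd order m, the Frobenius-type squaring map is injective on elements: if α = Σ a_i g^i and β = Σ b_i g^i are elements of Z_2[G] with β^2 = α and α^2 = α, then α = β. Consequently, no nontrivial idempotent α of Z_2[G] admits an element β ∉ {0, 1, α} with β^2 = α, i.e., no nontrivial idempotent is a Smarandache idempotent. -/
/-!
Over `ZMod p` the Frobenius `x ↦ x ^ p` of a commutative group algebra fixes the scalars and
sends `g` to `g ^ p`, so it is the map induced by `g ↦ g ^ p` on the group. When `p` is prime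
to `|G|` that map is a bijection, so Frobenius is injective; for an idempotent `α = β ^ 2` this
gives `α ^ 2 = β ^ 2`, hence `α = β`.
-/

open MonoidAlgebra

namespace MonoidAlgebra

instance charP {R M : Type*} [Semiring R] [Monoid M] (p : ℕ) [CharP R p] : CharP R[M] p :=
  charP_of_injective_ringHom (f := singleOneRingHom (R := R) (M := M)) single_right_injective p

variable {p : ℕ} [Fact p.Prime] {G : Type*}

theorem frobenius_eq_mapDomainRingHom [CommMonoid G] :
    frobenius (ZMod p)[G] p = mapDomainRingHom (ZMod p) (powMonoidHom p) := by
  refine ringHom_ext (fun r => ?_) (fun g => ?_) <;>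
    simp [frobenius_def, single_pow, ZMod.pow_card]

theorem frobenius_injective_of_coprime [CommGroup G] (hG : (Nat.card G).Coprime p) :
    Function.Injective (frobenius (ZMod p)[G] p) := by
  rw [frobenius_eq_mapDomainRingHom]
  exact mapDomain_injective hG.pow_left_bijective.injective

end MonoidAlgebra

theorem stmt_1_general (m : ℕ) (hm : Odd m) :
    (∀ α β : MonoidAlgebra (ZMod 2) (Multiplicative (ZMod m)),
      α ^ 2 = α → β ^ 2 = α → α = β) ∧
    (∀ α : MonoidAlgebra (ZMod 2) (Multiplicative (ZMod m)),
      α ^ 2 = α →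
        ¬ ∃ β : MonoidAlgebra (ZMod 2) (Multiplicative (ZMod m)),
          β ≠ 0 ∧ β ≠ 1 ∧ β ≠ α ∧ β ^ 2 = α) := by
  have hG : (Nat.card (Multiplicative (ZMod m))).Coprime 2 := by
    change (Nat.card (ZMod m)).Coprime 2
    rwa [Nat.card_zmod, Nat.coprime_two_right]
  have idempotent_eq_of_sq_eq : ∀ α β : (ZMod 2)[Multiplicative (ZMod m)], α ^ 2 = α → β ^ 2 = α → α = β :=
    fun α β hα hβ => frobenius_injective_of_coprime hG (by simp only [frobenius_def, hα, hβ])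
  exact ⟨idempotent_eq_of_sq_eq, fun α hα ⟨β, _, _, hβα, hβ⟩ => hβα (idempotent_eq_of_sq_eq α β hα hβ).symm⟩

theorem stmt_1 (m : ℕ) (hm : Odd m) (hm1 : 1 < m) :
    (∀ α β : MonoidAlgebra (ZMod 2) (Multiplicative (ZMod m)),
      α ^ 2 = α → β ^ 2 = α → α = β) ∧
    (∀ α : MonoidAlgebra (ZMod 2) (Multiplicative (ZMod m)),
      α ^ 2 = α →
        ¬ ∃ β : MonoidAlgebra (ZMod 2) (Multiplicative (ZMod m)),
          β ≠ 0 ∧ β ≠ 1 ∧ β ≠ α ∧ β ^ 2 = α) :=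
  stmt_1_general m hm
end

section
/- Let p = 2^k − 1 be a Mersenne prime (k prime) and let l be an odd positive integer with l < p. Then the residues 2l, 2^2 l, 2^3 l, ..., 2^k l modulo 2p are pairwise distinct; equivalently, in a cyclic group G = ⟨g⟩ of order 2p, the elements g^{2l}, g^{2^2 l}, ..., g^{2^k l} are pairwise distinct. -/
theorem stmt_7 (k p l : ℕ) (hk : Nat.Prime k) (hp : p = 2 ^ k - 1)
    (hpp : Nat.Prime p) (hl : Odd l) (hl0 : 0 < l) (hlp : l < p) :
    ∀ s t : ℕ, 1 ≤ s → s < t → t ≤ k →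
      ¬ (2 ^ t * l ≡ 2 ^ s * l [MOD 2 * p]) := by
  intro s t hs hst htk h
  have hk2 : 2 ≤ k := hk.two_le
  have hpk : 2 ^ k ≥ 4 := by
    calc (4:ℕ) = 2 ^ 2 := by norm_num
    _ ≤ 2 ^ k := Nat.pow_le_pow_right (by norm_num) hk2
  have hp3 : 3 ≤ p := by omega
  set d := t - s with hdd
  have hd1 : 1 ≤ d := by omega
  have ht : t = s + d := by omega
  have hdvd : (2 * p : ℤ) ∣ (2 ^ s * l - 2 ^ t * l) := by
    exact_mod_cast Nat.ModEq.dvd h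
  have hpd : (p:ℤ) ∣ 2 ^ s * (l * (2 ^ d - 1)) := by
    have h1 : (p:ℤ) ∣ (2 ^ s * l - 2 ^ t * l) :=
      dvd_trans (Dvd.intro_left 2 rfl) hdvd
    have h2 : (p:ℤ) ∣ (2 ^ t * l - 2 ^ s * l) := by
      have := h1.neg_right
      rwa [neg_sub] at this
    have heq : (2:ℤ) ^ t * l - 2 ^ s * l = 2 ^ s * (l * (2 ^ d - 1)) := by
      rw [ht, pow_add]; ring
    rwa [heq] at h2
  have hP : Prime (p:ℤ) := Nat.prime_iff_prime_int.mp hpp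
  have hnp2 : ¬ (p:ℤ) ∣ 2 ^ s := by
    intro hx
    have h2 : (p:ℤ) ∣ 2 := hP.dvd_of_dvd_pow hx
    have := Int.le_of_dvd (by norm_num) h2
    omega
  rcases (hP.dvd_or_dvd hpd).resolve_left hnp2 with hx
  rcases hP.dvd_or_dvd hx with hy | hy
  · have := Int.le_of_dvd (by exact_mod_cast hl0) hy
    have : p ≤ l := by exact_mod_cast this
    omega
  · have hpos : (0:ℤ) < 2 ^ d - 1 := by
      have : (2:ℤ) ^ 1 ≤ 2 ^ d := pow_le_pow_right₀ (by norm_num) hd1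
      simp at this; omega
    have hle := Int.le_of_dvd hpos hy
    have hdk : d ≤ k - 1 := by omega
    have h2d : (2:ℤ) ^ d ≤ 2 ^ (k - 1) := pow_le_pow_right₀ (by norm_num) hdk
    have hpz : (p:ℤ) = 2 ^ k - 1 := by
      have : (2:ℕ) ^ k ≥ 1 := Nat.one_le_two_pow
      push_cast [hp, this]; ring
    have hkk : (2:ℤ) ^ (k-1) * 2 = 2 ^ k := by
      rw [← pow_succ]; congr 1; omega
    have h2pos : (0:ℤ) < 2 ^ (k-1) := by positivity
    omega
end

section
/- Let p = 2^k − 1 be a Mersenne prime, G = ⟨g⟩ cyclic of order 2p, and l odd with 0 < l < p. Then the element α = Σ_{i=1}^{k} g^{2^i l} of Z_2[G] is a Smarandache idempotent: there exists β ∈ Z_2[G] \ {0, 1, α} with β^2 = α and αβ = β. -/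
/-!
The exponents `2 ^ i * l` are even and `2 ^ (k + 1) * l ≡ 2 * l (mod 2p)`, so in characteristic 2
squaring `α` permutes its summands cyclically and `α` is idempotent. Since `g ^ p` is an
involution, `β = g ^ p * α` satisfies `β ^ 2 = α` and `α * β = β`. The summands of `α` are
distinct (the order of 2 modulo `2 ^ k - 1` is `k`) and have even exponents, while those of `β`
have odd exponents; so `β` differs from `0`, `1` and `α`.
-/

open Finset MonoidAlgebra

theorem sum_Icc_pow_pow_char_pow_eq_self {A : Type*} [CommRing A] (q : ℕ) [Fact q.Prime]
    [CharP A q] {y : A} {k : ℕ} (hy : y ^ q ^ (k + 1) = y ^ q) :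
    (∑ i ∈ Icc 1 k, y ^ q ^ i) ^ q = ∑ i ∈ Icc 1 k, y ^ q ^ i := by
  have telescope : ∑ i ∈ Icc 1 k, (y ^ q ^ (i + 1) - y ^ q ^ i) = 0 := by
    rw [← Ico_add_one_right_eq_Icc, sum_Ico_sub (f := fun i => y ^ q ^ i) (by omega), hy,
      pow_one, sub_self]
  rw [sum_sub_distrib, sub_eq_zero] at telescope
  simp only [sum_pow_char, ← pow_mul, ← pow_succ, telescope]

theorem MonoidAlgebra.sum_of_comp_injective {K M ι : Type*} [Semiring K] [Nontrivial K]
    [MulOneClass M] {f : ι → M} (hf : Function.Injective f) :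
    Function.Injective fun s : Finset ι => ∑ i ∈ s, of K M (f i) := by
  classical
  intro s t hst
  ext i
  have := congrArg (fun x : MonoidAlgebra K M => x.coeff (f i)) hst
  simp only [coeff_sum, of_apply, Finsupp.coe_finsetSum, Finset.sum_apply, coeff_single,
    Finsupp.single_apply, hf.eq_iff, sum_ite_eq'] at this
  split_ifs at this <;> simp_all

theorem MonoidAlgebra.of_ofAdd_one_pow (K : Type*) {M : Type*} [Semiring K] [AddMonoidWithOne M]
    (n : ℕ) : of K (Multiplicative M) (.ofAdd 1) ^ n = of K (Multiplicative M) (.ofAdd (n : M)) := by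
  rw [← map_pow, ← ofAdd_nsmul, nsmul_one]

theorem two_pow_injOn_Icc_mersenne (k : ℕ) :
    Set.InjOn (fun i : ℕ => (2 : ZMod (mersenne k)) ^ i) (Set.Icc 1 k) := by
  intro i hi j hj hij
  rw [Set.mem_Icc] at hi hj
  wlog hle : i ≤ j generalizing i j
  · exact (this hj hi hij.symm (by omega)).symm
  obtain ⟨d, rfl⟩ := Nat.exists_eq_add_of_le hle
  have h2k : (2 : ZMod (mersenne k)) ^ k = 1 := by
    have := congrArg (Nat.cast : ℕ → ZMod (mersenne k)) (succ_mersenne k)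
    push_cast at this
    simpa using this.symm
  have h2d : (2 : ZMod (mersenne k)) ^ d = 1 :=
    ((IsUnit.of_pow_eq_one h2k (by omega)).pow i).mul_left_cancel
      (by simpa [pow_add] using hij.symm)
  have hdvd : mersenne k ∣ mersenne d := by
    rw [← ZMod.natCast_eq_zero_iff]
    have := congrArg (Nat.cast : ℕ → ZMod (mersenne k)) (succ_mersenne d)
    push_cast at this
    rwa [h2d, add_eq_right] at this
  by_contra hd
  have := mersenne_le_mersenne.mp (Nat.le_of_dvd (mersenne_pos.mpr (by omega)) hdvd)
  omega

theorem natCast_two_pow_mul_injOn {k p l : ℕ} (hp : p = mersenne k) (hpp : p.Prime)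
    (hl0 : 0 < l) (hlp : l < p) :
    Set.InjOn (fun i : ℕ => ((2 ^ i * l : ℕ) : ZMod (2 * p))) (Set.Icc 1 k) := by
  have := Fact.mk hpp
  intro i hi j hj hij
  have hl : (l : ZMod p) ≠ 0 := by
    rw [Ne, ZMod.natCast_eq_zero_iff]
    exact fun h => hl0.ne' (Nat.eq_zero_of_dvd_of_lt h hlp)
  have := congrArg (ZMod.castHom (dvd_mul_left p 2) (ZMod p)) hij
  rw [map_natCast, map_natCast] at this
  push_cast at this
  subst hp
  exact two_pow_injOn_Icc_mersenne k hi hj (mul_right_cancel₀ hl this)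

theorem sq_sum_Icc_pow_two_pow_mul_eq_self {A : Type*} [CommRing A] [CharP A 2] {g : A}
    {k p : ℕ} (hp : p + 1 = 2 ^ k) (hg : g ^ (2 * p) = 1) (l : ℕ) :
    (∑ i ∈ Icc 1 k, g ^ (2 ^ i * l)) ^ 2 = ∑ i ∈ Icc 1 k, g ^ (2 ^ i * l) := by
  simp_rw [mul_comm _ l, pow_mul]
  refine sum_Icc_pow_pow_char_pow_eq_self 2 ?_
  rw [← pow_mul, ← pow_mul, pow_succ, ← hp, show l * ((p + 1) * 2) = 2 * p * l + l * 2 by ring,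
    pow_add, pow_mul, hg, one_pow, one_mul]

theorem MonoidAlgebra.of_ofAdd_mul_sum_ne {K M N : Type*} [Semiring K] [Nontrivial K]
    [AddCancelMonoid M] [AddZeroClass N] (π : M →+ N) {c : M} (hc : π c ≠ 0) {S : Finset M}
    (hS : S.Nonempty) (hπS : ∀ a ∈ S, π a = 0) {x : MonoidAlgebra K (Multiplicative M)}
    (hx : x = ∑ a ∈ S, of K _ (.ofAdd a)) :
    of K _ (.ofAdd c) * x ≠ 0 ∧ of K _ (.ofAdd c) * x ≠ 1 ∧ of K _ (.ofAdd c) * x ≠ x := by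
  have hsum := sum_of_comp_injective (K := K) (Multiplicative.ofAdd (α := M)).injective
  set S' := S.map (addLeftEmbedding c)
  have hπS' (a : M) (ha : a ∈ S') : π a ≠ 0 := by
    obtain ⟨b, hb, rfl⟩ := mem_map.mp ha
    simpa [hπS b hb] using hc
  have hcx : of K _ (.ofAdd c) * x = ∑ a ∈ S', of K (Multiplicative M) (.ofAdd a) := by
    simp only [hx, S', mul_sum, sum_map, ← map_mul, ← ofAdd_add, addLeftEmbedding_apply]
  have h_one : (1 : MonoidAlgebra K (Multiplicative M)) = ∑ a ∈ {0}, of K _ (.ofAdd a) := by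
    simp [one_def]
  rw [hcx, hx]
  refine ⟨fun h => ?_, fun h => ?_, fun h => ?_⟩
  · exact (hS.map (f := addLeftEmbedding c)).ne_empty (hsum (h.trans sum_empty.symm))
  · exact hπS' 0 (hsum (h.trans h_one) ▸ mem_singleton_self 0) π.map_zero
  · obtain ⟨a, ha⟩ := hS.map (f := addLeftEmbedding c)
    exact hπS' a ha (hπS a (hsum h ▸ ha))

theorem of_ofAdd_one_pow_mul_sum_ne {K : Type*} [Semiring K] [Nontrivial K] {k p l : ℕ}
    (hp : p = mersenne k) (hpp : p.Prime) (hl0 : 0 < l) (hlp : l < p)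
    {g : MonoidAlgebra K (Multiplicative (ZMod (2 * p)))} (hg : g = of K _ (.ofAdd 1))
    {α : MonoidAlgebra K (Multiplicative (ZMod (2 * p)))}
    (hα : α = ∑ i ∈ Icc 1 k, g ^ (2 ^ i * l)) :
    g ^ p * α ≠ 0 ∧ g ^ p * α ≠ 1 ∧ g ^ p * α ≠ α := by
  have hk : k ≠ 0 := by
    rintro rfl
    exact Nat.not_prime_zero (by simpa [hp] using hpp)
  set S := (Icc 1 k).image fun i => ((2 ^ i * l : ℕ) : ZMod (2 * p))
  have hα_S : α = ∑ a ∈ S, of K _ (.ofAdd a) := by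
    rw [hα, sum_image (by simpa using natCast_two_pow_mul_injOn hp hpp hl0 hlp)]
    simp only [hg, of_ofAdd_one_pow]
  let parity := (ZMod.castHom (dvd_mul_right 2 p) (ZMod 2)).toAddMonoidHom
  have hp_odd : parity p ≠ 0 := by
    simpa [parity, ZMod.natCast_eq_zero_iff_even] using hp ▸ mersenne_odd.mpr hk
  have hS_even : ∀ a ∈ S, parity a = 0 := by
    simp only [S, mem_image, mem_Icc]
    rintro _ ⟨i, ⟨hi, -⟩, rfl⟩
    change ZMod.castHom (dvd_mul_right 2 p) (ZMod 2) _ = 0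
    rw [map_natCast, ZMod.natCast_eq_zero_iff_even]
    exact (Nat.even_pow.mpr ⟨even_two, by omega⟩).mul_right l
  have hS : S.Nonempty := by simpa [S] using Nat.one_le_iff_ne_zero.mpr hk
  rw [hg, of_ofAdd_one_pow]
  exact of_ofAdd_mul_sum_ne parity hp_odd hS hS_even hα_S

theorem stmt_10_general (k p l : ℕ) (hp : p = 2 ^ k - 1)
    (hpp : Nat.Prime p) (hl0 : 0 < l) (hlp : l < p)
    (g : MonoidAlgebra (ZMod 2) (Multiplicative (ZMod (2 * p))))
    (hg : g = MonoidAlgebra.of (ZMod 2) (Multiplicative (ZMod (2 * p)))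
      (Multiplicative.ofAdd (1 : ZMod (2 * p))))
    (α : MonoidAlgebra (ZMod 2) (Multiplicative (ZMod (2 * p))))
    (hα : α = ∑ i ∈ Finset.Icc 1 k, g ^ (2 ^ i * l)) :
    ∃ β : MonoidAlgebra (ZMod 2) (Multiplicative (ZMod (2 * p))),
      β ≠ 0 ∧ β ≠ 1 ∧ β ≠ α ∧ β ^ 2 = α ∧ α * β = β := by
  have : CharP (MonoidAlgebra (ZMod 2) (Multiplicative (ZMod (2 * p)))) 2 :=
    charP_of_injective_algebraMap' (ZMod 2) 2
  have hg2p : g ^ (2 * p) = 1 := by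
    rw [hg, of_ofAdd_one_pow, ZMod.natCast_self, ofAdd_zero, map_one]
  have h_idem : α ^ 2 = α := hα ▸ sq_sum_Icc_pow_two_pow_mul_eq_self (hp ▸ succ_mersenne k) hg2p l
  obtain ⟨h0, h1, hβα⟩ := of_ofAdd_one_pow_mul_sum_ne hp hpp hl0 hlp hg hα
  -- the paper's witness `∑ g ^ tᵢ`: `p + 2 ^ i * l` is odd and `≡ 2 ^ i * l (mod p)`
  refine ⟨g ^ p * α, h0, h1, hβα, ?_, ?_⟩
  · linear_combination α ^ 2 * hg2p + h_idem
  · linear_combination g ^ p * h_idem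

theorem stmt_10 (k p l : ℕ) (hk : Nat.Prime k) (hp : p = 2 ^ k - 1)
    (hpp : Nat.Prime p) (hl : Odd l) (hl0 : 0 < l) (hlp : l < p)
    (g : MonoidAlgebra (ZMod 2) (Multiplicative (ZMod (2 * p))))
    (hg : g = MonoidAlgebra.of (ZMod 2) (Multiplicative (ZMod (2 * p)))
      (Multiplicative.ofAdd (1 : ZMod (2 * p))))
    (α : MonoidAlgebra (ZMod 2) (Multiplicative (ZMod (2 * p))))
    (hα : α = ∑ i ∈ Finset.Icc 1 k, g ^ (2 ^ i * l)) :
    ∃ β : MonoidAlgebra (ZMod 2) (Multiplicative (ZMod (2 * p))),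
      β ≠ 0 ∧ β ≠ 1 ∧ β ≠ α ∧ β ^ 2 = α ∧ α * β = β :=
  stmt_10_general k p l hp hpp hl0 hlp g hg α hα
end

section
/- Let R be an integral domain, G a finite group, H ≤ G of prime order p, with p·1_R a unit in R satisfying (p·1_R)^3 = (p·1_R)^{-1}. Then α = p^{-1} Σ_{x∈H} x is a Smarandache idempotent of R[G], witnessed by β = p Σ_{x∈H} x: β^2 = α and αβ = β. -/
theorem stmt_17 (R : Type*) [CommRing R] [IsDomain R]
    (G : Type*) [Group G] [Fintype G]
    (H : Subgroup G) [Fintype H] (p : ℕ) (hp : Nat.Prime p) (hcard : Nat.card H = p)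
    (hu : IsUnit (p : R)) (h4 : (p : R) ^ 3 * (p : R) = 1)
    (α β : MonoidAlgebra R G)
    (hα : α = (↑hu.unit⁻¹ : R) • ∑ x : H, MonoidAlgebra.of R G (x : G))
    (hβ : β = (p : R) • ∑ x : H, MonoidAlgebra.of R G (x : G)) :
    α ^ 2 = α ∧ β ^ 2 = α ∧ α * β = β := by
  set σ := ∑ x : H, MonoidAlgebra.of R G (x : G) with hσ
  set c : R := (↑hu.unit⁻¹ : R) with hc
  have hcp : c * (p : R) = 1 := by
    have := hu.unit.inv_mul
    simpa [hc, hu.unit_spec] using congrArg (Units.val) this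
  have key : σ * σ = (p : R) • σ := by
    rw [hσ, Finset.sum_mul_sum]
    have step : ∀ x : H, ∑ y : H, MonoidAlgebra.of R G (x : G) * MonoidAlgebra.of R G (y : G)
        = σ := by
      intro x
      have : ∀ y : H, MonoidAlgebra.of R G (x : G) * MonoidAlgebra.of R G (y : G)
          = MonoidAlgebra.of R G (((Equiv.mulLeft x) y : H) : G) := by
        intro y; simp [← map_mul]
      rw [Finset.sum_congr rfl (fun y _ => this y), hσ]
      exact Fintype.sum_equiv (Equiv.mulLeft x) _ _ (fun y => rfl)
    rw [Finset.sum_congr rfl (fun x _ => step x), Finset.sum_const, Finset.card_univ,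
      ← Nat.card_eq_fintype_card, hcard, ← Nat.cast_smul_eq_nsmul R]
  have hP : (p : R) ^ 3 = c := by
    have : c * ((p : R) ^ 3 * (p : R)) = c := by rw [h4, mul_one]
    calc (p : R) ^ 3 = c * (p : R) * (p : R) ^ 3 := by rw [hcp, one_mul]
      _ = c * ((p : R) ^ 3 * (p : R)) := by ring
      _ = c := this
  subst hα hβ
  refine ⟨?_, ?_, ?_⟩
  · rw [pow_two, smul_mul_smul, key, smul_smul]
    congr 1
    calc c * c * (p : R) = c * (c * (p : R)) := by ring
      _ = c := by rw [hcp, mul_one]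
  · rw [pow_two, smul_mul_smul, key, smul_smul]
    congr 1
    rw [← hP]; ring
  · rw [smul_mul_smul, key, smul_smul]
    congr 1
    calc c * (p : R) * (p : R) = c * (p : R) * (p : R) := rfl
      _ = (p:R) := by rw [hcp, one_mul]
end
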